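/- arXiv:1105.2166 — 4 statements merged into one kernel-verified Lean document; each statement's English description precedes it below -/
import Mathlib

section
/- Let a ∈ ℝ and let u, v : ℝ → H be differentiable with derivatives u', v'. If u, u', v, v' all belong to L²((−∞, a); H), then the function t ↦ ⟪u'(t), v(t)⟫ + ⟪u(t), v'(t)⟫ is integrable on (−∞, a) and ∫_{−∞}^{a} (⟪u'(t), v(t)⟫ + ⟪u(t), v'(t)⟫) dt = ⟪u(a), v(a)⟫. -/
open MeasureTheory

/-- A measurable `H`-valued function is in `L²(J; H)` if `∫_J ‖w t‖² dt < ∞`. -/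
def MemL2 {H : Type*} [NormedAddCommGroup H] (w : ℝ → H) (J : Set ℝ) : Prop :=
  MeasureTheory.IntegrableOn (fun t => ‖w t‖ ^ 2) J

/-- Product of two L² functions is L¹ (pointwise inner-product bound). -/
lemma aux_inner_integrableOn
    {H : Type*} [NormedAddCommGroup H] [InnerProductSpace ℂ H]
    {s : Set ℝ} {p q : ℝ → H}
    (hpm : MeasureTheory.AEStronglyMeasurable p (volume.restrict s))
    (hqm : MeasureTheory.AEStronglyMeasurable q (volume.restrict s))
    (hp : MeasureTheory.IntegrableOn (fun t => ‖p t‖ ^ 2) s)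
    (hq : MeasureTheory.IntegrableOn (fun t => ‖q t‖ ^ 2) s) :
    MeasureTheory.IntegrableOn (fun t => (inner ℂ (p t) (q t) : ℂ)) s := by
  have hbound : Integrable (fun t => (‖p t‖ ^ 2 + ‖q t‖ ^ 2) / 2) (volume.restrict s) :=
    (hp.add hq).div_const 2
  refine hbound.mono' ?_ ?_
  · exact hpm.inner hqm
  · filter_upwards with t
    have h1 : ‖(inner ℂ (p t) (q t) : ℂ)‖ ≤ ‖p t‖ * ‖q t‖ := norm_inner_le_norm _ _
    nlinarith [sq_nonneg (‖p t‖ - ‖q t‖), norm_nonneg (p t), norm_nonneg (q t)]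

/-- Integration by parts (Green formula) on the half-line `(−∞, a)`:
if `u, u', v, v'` are in `L²((−∞, a); H)`, then `t ↦ ⟪u'(t), v(t)⟫ + ⟪u(t), v'(t)⟫`
is integrable on `(−∞, a)` and its integral equals `⟪u(a), v(a)⟫`. -/
theorem integral_inner_add_inner_Iio
    {H : Type*} [NormedAddCommGroup H] [InnerProductSpace ℂ H] [CompleteSpace H]
    (a : ℝ) (u u' v v' : ℝ → H)
    (hu : ∀ t : ℝ, HasDerivAt u (u' t) t) (hv : ∀ t : ℝ, HasDerivAt v (v' t) t)
    (hL2u : MemL2 u (Set.Iio a)) (hL2u' : MemL2 u' (Set.Iio a))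
    (hL2v : MemL2 v (Set.Iio a)) (hL2v' : MemL2 v' (Set.Iio a)) :
    MeasureTheory.IntegrableOn
      (fun t => (inner ℂ (u' t) (v t) : ℂ) + (inner ℂ (u t) (v' t) : ℂ)) (Set.Iio a) ∧
    ∫ t in Set.Iio a, ((inner ℂ (u' t) (v t) : ℂ) + (inner ℂ (u t) (v' t) : ℂ)) =
      (inner ℂ (u a) (v a) : ℂ) := by
  have hIio_Iic : (Set.Iio a : Set ℝ) =ᵐ[volume] Set.Iic a := Iio_ae_eq_Iic
  have hL2u₁ : IntegrableOn (fun t => ‖u t‖ ^ 2) (Set.Iic a) := hL2u.congr_set_ae hIio_Iic.symm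
  have hL2u'₁ : IntegrableOn (fun t => ‖u' t‖ ^ 2) (Set.Iic a) := hL2u'.congr_set_ae hIio_Iic.symm
  have hL2v₁ : IntegrableOn (fun t => ‖v t‖ ^ 2) (Set.Iic a) := hL2v.congr_set_ae hIio_Iic.symm
  have hL2v'₁ : IntegrableOn (fun t => ‖v' t‖ ^ 2) (Set.Iic a) := hL2v'.congr_set_ae hIio_Iic.symm
  have hcu : Continuous u := continuous_iff_continuousAt.2 fun t => (hu t).continuousAt
  have hcv : Continuous v := continuous_iff_continuousAt.2 fun t => (hv t).continuousAt
  have hu'm : StronglyMeasurable u' := by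
    have : u' = deriv u := funext fun t => ((hu t).deriv).symm
    rw [this]; exact stronglyMeasurable_deriv u
  have hv'm : StronglyMeasurable v' := by
    have : v' = deriv v := funext fun t => ((hv t).deriv).symm
    rw [this]; exact stronglyMeasurable_deriv v
  -- integrability of the two inner-product terms on Iic a
  have hi1 : IntegrableOn (fun t => (inner ℂ (u' t) (v t) : ℂ)) (Set.Iic a) :=
    aux_inner_integrableOn hu'm.aestronglyMeasurable.restrict
      hcv.aestronglyMeasurable.restrict hL2u'₁ hL2v₁
  have hi2 : IntegrableOn (fun t => (inner ℂ (u t) (v' t) : ℂ)) (Set.Iic a) :=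
    aux_inner_integrableOn hcu.aestronglyMeasurable.restrict
      hv'm.aestronglyMeasurable.restrict hL2u₁ hL2v'₁
  have hfint : IntegrableOn (fun t => (inner ℂ (u t) (v t) : ℂ)) (Set.Iic a) :=
    aux_inner_integrableOn hcu.aestronglyMeasurable.restrict
      hcv.aestronglyMeasurable.restrict hL2u₁ hL2v₁
  have hgint : IntegrableOn
      (fun t => (inner ℂ (u' t) (v t) : ℂ) + (inner ℂ (u t) (v' t) : ℂ)) (Set.Iic a) :=
    hi1.add hi2
  -- derivative of f t = ⟪u t, v t⟫
  have hderiv : ∀ t : ℝ, HasDerivAt (fun t => (inner ℂ (u t) (v t) : ℂ))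
      ((inner ℂ (u' t) (v t) : ℂ) + (inner ℂ (u t) (v' t) : ℂ)) t := by
    intro t
    have := ((hu t).inner ℂ (hv t))
    simpa [add_comm] using this
  -- the function tends to 0 at -∞
  have htend : Filter.Tendsto (fun t => (inner ℂ (u t) (v t) : ℂ)) Filter.atBot (nhds 0) :=
    tendsto_zero_of_hasDerivAt_of_integrableOn_Iic (fun t _ => hderiv t) hgint hfint
  have hFTC : ∫ t in Set.Iic a, ((inner ℂ (u' t) (v t) : ℂ) + (inner ℂ (u t) (v' t) : ℂ)) =
      (inner ℂ (u a) (v a) : ℂ) - 0 :=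
    integral_Iic_of_hasDerivAt_of_tendsto
      ((hderiv a).continuousAt.continuousWithinAt) (fun t _ => hderiv t) hgint htend
  constructor
  · exact hgint.congr_set_ae hIio_Iic
  · rw [setIntegral_congr_set hIio_Iic, hFTC, sub_zero]
end

section
/- Let a ∈ ℝ and let u, v : ℝ → H be differentiable with derivatives u', v'. If u, u', v, v' all belong to L²((a, ∞); H), then the function t ↦ ⟪u'(t), v(t)⟫ + ⟪u(t), v'(t)⟫ is integrable on (a, ∞) and ∫_{a}^{∞} (⟪u'(t), v(t)⟫ + ⟪u(t), v'(t)⟫) dt = −⟪u(a), v(a)⟫. -/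
open MeasureTheory

/-- If `f, g` are a.e. strongly measurable and in `L²`, then `⟪f, g⟫` is integrable. -/
lemma inner_integrableOn_of_memL2 {H : Type*} [NormedAddCommGroup H] [InnerProductSpace ℂ H]
    {f g : ℝ → H} {s : Set ℝ}
    (hf : AEStronglyMeasurable f (volume.restrict s))
    (hg : AEStronglyMeasurable g (volume.restrict s))
    (hf2 : MemL2 f s) (hg2 : MemL2 g s) :
    MeasureTheory.IntegrableOn (fun t => (inner ℂ (f t) (g t) : ℂ)) s := by
  refine Integrable.mono' (hf2.add hg2) (hf.inner hg) ?_
  filter_upwards with t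
  have h1 := norm_inner_le_norm (𝕜 := ℂ) (f t) (g t)
  have h2 : ‖f t‖ * ‖g t‖ ≤ ‖f t‖ ^ 2 + ‖g t‖ ^ 2 := by nlinarith [norm_nonneg (f t), norm_nonneg (g t), sq_nonneg (‖f t‖ - ‖g t‖)]
  calc ‖(inner ℂ (f t) (g t) : ℂ)‖ ≤ ‖f t‖ * ‖g t‖ := h1
    _ ≤ ‖f t‖ ^ 2 + ‖g t‖ ^ 2 := h2
    _ = ((fun t => ‖f t‖ ^ 2) + fun t => ‖g t‖ ^ 2) t := rfl

/-- Integration by parts (Green formula) on the half-line `(a, ∞)`: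
if `u, u', v, v'` are in `L²((a, ∞); H)`, then `t ↦ ⟪u'(t), v(t)⟫ + ⟪u(t), v'(t)⟫`
is integrable on `(a, ∞)` and its integral equals `−⟪u(a), v(a)⟫`. -/
theorem integral_inner_add_inner_Ioi
    {H : Type*} [NormedAddCommGroup H] [InnerProductSpace ℂ H] [CompleteSpace H]
    (a : ℝ) (u u' v v' : ℝ → H)
    (hu : ∀ t : ℝ, HasDerivAt u (u' t) t) (hv : ∀ t : ℝ, HasDerivAt v (v' t) t)
    (hL2u : MemL2 u (Set.Ioi a)) (hL2u' : MemL2 u' (Set.Ioi a))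
    (hL2v : MemL2 v (Set.Ioi a)) (hL2v' : MemL2 v' (Set.Ioi a)) :
    MeasureTheory.IntegrableOn
      (fun t => (inner ℂ (u' t) (v t) : ℂ) + (inner ℂ (u t) (v' t) : ℂ)) (Set.Ioi a) ∧
    ∫ t in Set.Ioi a, ((inner ℂ (u' t) (v t) : ℂ) + (inner ℂ (u t) (v' t) : ℂ)) =
      -(inner ℂ (u a) (v a) : ℂ) := by
  have hcu : Continuous u := by
    rw [continuous_iff_continuousAt]; exact fun t => (hu t).continuousAt
  have hcv : Continuous v := by
    rw [continuous_iff_continuousAt]; exact fun t => (hv t).continuousAt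
  have hu'eq : u' = deriv u := funext fun t => ((hu t).deriv).symm
  have hv'eq : v' = deriv v := funext fun t => ((hv t).deriv).symm
  have hmu : AEStronglyMeasurable u (volume.restrict (Set.Ioi a)) :=
    hcu.aestronglyMeasurable
  have hmv : AEStronglyMeasurable v (volume.restrict (Set.Ioi a)) :=
    hcv.aestronglyMeasurable
  have hmu' : AEStronglyMeasurable u' (volume.restrict (Set.Ioi a)) := by
    rw [hu'eq]; exact (stronglyMeasurable_deriv u).aestronglyMeasurable
  have hmv' : AEStronglyMeasurable v' (volume.restrict (Set.Ioi a)) := by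
    rw [hv'eq]; exact (stronglyMeasurable_deriv v).aestronglyMeasurable
  -- integrability of the integrand
  have hint1 : MeasureTheory.IntegrableOn (fun t => (inner ℂ (u' t) (v t) : ℂ)) (Set.Ioi a) :=
    inner_integrableOn_of_memL2 hmu' hmv hL2u' hL2v
  have hint2 : MeasureTheory.IntegrableOn (fun t => (inner ℂ (u t) (v' t) : ℂ)) (Set.Ioi a) :=
    inner_integrableOn_of_memL2 hmu hmv' hL2u hL2v'
  have hintF : MeasureTheory.IntegrableOn (fun t => (inner ℂ (u t) (v t) : ℂ)) (Set.Ioi a) :=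
    inner_integrableOn_of_memL2 hmu hmv hL2u hL2v
  have hint : MeasureTheory.IntegrableOn
      (fun t => (inner ℂ (u' t) (v t) : ℂ) + (inner ℂ (u t) (v' t) : ℂ)) (Set.Ioi a) :=
    hint1.add hint2
  refine ⟨hint, ?_⟩
  set F : ℝ → ℂ := fun t => (inner ℂ (u t) (v t) : ℂ) with hF
  have hFderiv : ∀ x ∈ Set.Ioi a, HasDerivAt F
      ((inner ℂ (u' x) (v x) : ℂ) + (inner ℂ (u x) (v' x) : ℂ)) x := by
    intro x _
    have := HasDerivAt.inner ℂ (hu x) (hv x)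
    simpa [add_comm] using this
  have hF0 : Filter.Tendsto F Filter.atTop (nhds 0) :=
    tendsto_zero_of_hasDerivAt_of_integrableOn_Ioi hFderiv hint hintF
  have hcontF : ContinuousWithinAt F (Set.Ici a) a :=
    ((hcu.inner hcv).continuousAt).continuousWithinAt
  have := integral_Ioi_of_hasDerivAt_of_tendsto hcontF hFderiv hint hF0
  rw [this, zero_sub]
end

section
/- Let a₁ < a₃ be real numbers. For a pair u = (u₁, u₃) of H-valued functions, set Y₁(u) = (1/(i√2))(u₃(a₃) + u₁(a₁)) and Y₂(u) = (1/√2)(u₁(a₁) − u₃(a₃)). Then for all differentiable u₁, v₁ : ℝ → H with u₁, u₁', v₁, v₁' ∈ L²((−∞, a₁); H) and all differentiable u₃, v₃ : ℝ → H with u₃, u₃', v₃, v₃' ∈ L²((a₃, ∞); H), one has ∫_{−∞}^{a₁} (⟪−i u₁'(t), v₁(t)⟫ − ⟪u₁(t), −i v₁'(t)⟫) dt + ∫_{a₃}^{∞} (⟪−i u₃'(t), v₃(t)⟫ − ⟪u₃(t), −i v₃'(t)⟫) dt = ⟪Y₁(u), Y₂(v)⟫ − ⟪Y₂(u), Y₁(v)⟫,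 where u = (u₁, u₃) and v = (v₁, v₃). -/
open MeasureTheory

/-- The boundary map `Y₁(u₁, u₃) = (1/(i√2)) (u₃(a₃) + u₁(a₁))`. -/
noncomputable def Y₁ {H : Type*} [NormedAddCommGroup H] [InnerProductSpace ℂ H]
    (a₁ a₃ : ℝ) (u₁ u₃ : ℝ → H) : H :=
  (1 / (Complex.I * (Real.sqrt 2 : ℂ))) • (u₃ a₃ + u₁ a₁)

/-- The boundary map `Y₂(u₁, u₃) = (1/√2) (u₁(a₁) − u₃(a₃))`. -/
noncomputable def Y₂ {H : Type*} [NormedAddCommGroup H] [InnerProductSpace ℂ H]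
    (a₁ a₃ : ℝ) (u₁ u₃ : ℝ → H) : H :=
  (1 / (Real.sqrt 2 : ℂ)) • (u₁ a₁ - u₃ a₃)

section Aux

open Set Filter

variable {H : Type*} [NormedAddCommGroup H] [InnerProductSpace ℂ H]

omit [InnerProductSpace ℂ H] in
lemma MemL2.iic {a : ℝ} {w : ℝ → H} (h : MemL2 w (Iio a)) : MemL2 w (Iic a) :=
  (integrableOn_Iic_iff_integrableOn_Iio).2 h

/-- Integrability on `s` of the derivative of the inner product of two `L²` functions. -/
lemma aux_integrableOn_inner_deriv {s : Set ℝ}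
    (u u' v v' : ℝ → H)
    (hu : ∀ t : ℝ, HasDerivAt u (u' t) t) (hv : ∀ t : ℝ, HasDerivAt v (v' t) t)
    (hL2u : MemL2 u s) (hL2u' : MemL2 u' s) (hL2v : MemL2 v s) (hL2v' : MemL2 v' s) :
    IntegrableOn (fun t => (inner ℂ (u t) (v' t) : ℂ) + (inner ℂ (u' t) (v t) : ℂ)) s := by
  have hf : ∀ t : ℝ, HasDerivAt (fun t => (inner ℂ (u t) (v t) : ℂ))
      ((inner ℂ (u t) (v' t) : ℂ) + (inner ℂ (u' t) (v t) : ℂ)) t :=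
    fun t => (hu t).inner ℂ (hv t)
  have hmeas : StronglyMeasurable
      (fun t => (inner ℂ (u t) (v' t) : ℂ) + (inner ℂ (u' t) (v t) : ℂ)) := by
    have : (fun t => (inner ℂ (u t) (v' t) : ℂ) + (inner ℂ (u' t) (v t) : ℂ))
        = deriv (fun t => (inner ℂ (u t) (v t) : ℂ)) := funext fun t => ((hf t).deriv).symm
    rw [this]
    exact stronglyMeasurable_deriv _
  refine Integrable.mono' (g := fun t =>
      ((‖u t‖ ^ 2 + ‖v' t‖ ^ 2) / 2 + (‖u' t‖ ^ 2 + ‖v t‖ ^ 2) / 2))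
    ?_ hmeas.aestronglyMeasurable ?_
  · exact (((hL2u.add hL2v').div_const 2).add ((hL2u'.add hL2v).div_const 2))
  · filter_upwards with t
    have h1 : ‖(inner ℂ (u t) (v' t) : ℂ)‖ ≤ ‖u t‖ * ‖v' t‖ := norm_inner_le_norm _ _
    have h2 : ‖(inner ℂ (u' t) (v t) : ℂ)‖ ≤ ‖u' t‖ * ‖v t‖ := norm_inner_le_norm _ _
    have := norm_add_le (inner ℂ (u t) (v' t) : ℂ) (inner ℂ (u' t) (v t) : ℂ)
    nlinarith [sq_nonneg (‖u t‖ - ‖v' t‖), sq_nonneg (‖u' t‖ - ‖v t‖)]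

/-- Integrability on `s` of the inner product of two continuous `L²` functions. -/
lemma aux_integrableOn_inner {s : Set ℝ}
    (u v : ℝ → H) (hu : Continuous u) (hv : Continuous v)
    (hL2u : MemL2 u s) (hL2v : MemL2 v s) :
    IntegrableOn (fun t => (inner ℂ (u t) (v t) : ℂ)) s := by
  have hg : IntegrableOn (fun t => (‖u t‖ ^ 2 + ‖v t‖ ^ 2) / 2) s :=
    (hL2u.add hL2v).div_const 2
  have hmeas : Continuous (fun t => (inner ℂ (u t) (v t) : ℂ)) := hu.inner hv
  refine Integrable.mono' hg hmeas.aestronglyMeasurable ?_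
  filter_upwards with t
  have h1 : ‖(inner ℂ (u t) (v t) : ℂ)‖ ≤ ‖u t‖ * ‖v t‖ := norm_inner_le_norm _ _
  nlinarith [sq_nonneg (‖u t‖ - ‖v t‖)]

variable [CompleteSpace H]

/-- FTC on `(-∞, a)` for the inner product of two `L²` functions with `L²` derivatives. -/
lemma key_Iio (a : ℝ) (u u' v v' : ℝ → H)
    (hu : ∀ t : ℝ, HasDerivAt u (u' t) t) (hv : ∀ t : ℝ, HasDerivAt v (v' t) t)
    (hL2u : MemL2 u (Iio a)) (hL2u' : MemL2 u' (Iio a))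
    (hL2v : MemL2 v (Iio a)) (hL2v' : MemL2 v' (Iio a)) :
    (∫ t in Iio a, ((inner ℂ (u t) (v' t) : ℂ) + (inner ℂ (u' t) (v t) : ℂ)))
      = (inner ℂ (u a) (v a) : ℂ) := by
  have hf : ∀ t : ℝ, HasDerivAt (fun t => (inner ℂ (u t) (v t) : ℂ))
      ((inner ℂ (u t) (v' t) : ℂ) + (inner ℂ (u' t) (v t) : ℂ)) t :=
    fun t => (hu t).inner ℂ (hv t)
  have hcu : Continuous u := continuous_iff_continuousAt.2 fun t => (hu t).continuousAt
  have hcv : Continuous v := continuous_iff_continuousAt.2 fun t => (hv t).continuousAt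
  have f'int : IntegrableOn
      (fun t => (inner ℂ (u t) (v' t) : ℂ) + (inner ℂ (u' t) (v t) : ℂ)) (Iic a) :=
    aux_integrableOn_inner_deriv u u' v v' hu hv hL2u.iic hL2u'.iic hL2v.iic hL2v'.iic
  have fint : IntegrableOn (fun t => (inner ℂ (u t) (v t) : ℂ)) (Iic a) :=
    aux_integrableOn_inner u v hcu hcv hL2u.iic hL2v.iic
  have hzero := tendsto_zero_of_hasDerivAt_of_integrableOn_Iic
    (fun x _ => hf x) f'int fint
  have h := integral_Iic_of_hasDerivAt_of_tendsto' (fun x _ => hf x) f'int hzero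
  rw [← integral_Iic_eq_integral_Iio, h, sub_zero]

/-- FTC on `(a, ∞)` for the inner product of two `L²` functions with `L²` derivatives. -/
lemma key_Ioi (a : ℝ) (u u' v v' : ℝ → H)
    (hu : ∀ t : ℝ, HasDerivAt u (u' t) t) (hv : ∀ t : ℝ, HasDerivAt v (v' t) t)
    (hL2u : MemL2 u (Ioi a)) (hL2u' : MemL2 u' (Ioi a))
    (hL2v : MemL2 v (Ioi a)) (hL2v' : MemL2 v' (Ioi a)) :
    (∫ t in Ioi a, ((inner ℂ (u t) (v' t) : ℂ) + (inner ℂ (u' t) (v t) : ℂ)))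
      = -(inner ℂ (u a) (v a) : ℂ) := by
  have hf : ∀ t : ℝ, HasDerivAt (fun t => (inner ℂ (u t) (v t) : ℂ))
      ((inner ℂ (u t) (v' t) : ℂ) + (inner ℂ (u' t) (v t) : ℂ)) t :=
    fun t => (hu t).inner ℂ (hv t)
  have hcu : Continuous u := continuous_iff_continuousAt.2 fun t => (hu t).continuousAt
  have hcv : Continuous v := continuous_iff_continuousAt.2 fun t => (hv t).continuousAt
  have f'int : IntegrableOn
      (fun t => (inner ℂ (u t) (v' t) : ℂ) + (inner ℂ (u' t) (v t) : ℂ)) (Ioi a) :=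
    aux_integrableOn_inner_deriv u u' v v' hu hv hL2u hL2u' hL2v hL2v'
  have fint : IntegrableOn (fun t => (inner ℂ (u t) (v t) : ℂ)) (Ioi a) :=
    aux_integrableOn_inner u v hcu hcv hL2u hL2v
  have hzero := tendsto_zero_of_hasDerivAt_of_integrableOn_Ioi
    (fun x _ => hf x) f'int fint
  have h := integral_Ioi_of_hasDerivAt_of_tendsto' (fun x _ => hf x) f'int hzero
  rw [h, zero_sub]

omit [CompleteSpace H] in
/-- Algebraic evaluation of the boundary form. -/
lemma rhs_eval (a₁ a₃ : ℝ) (u₁ u₃ v₁ v₃ : ℝ → H) :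
    (inner ℂ (Y₁ a₁ a₃ u₁ u₃) (Y₂ a₁ a₃ v₁ v₃) : ℂ) -
      (inner ℂ (Y₂ a₁ a₃ u₁ u₃) (Y₁ a₁ a₃ v₁ v₃) : ℂ)
    = Complex.I * (inner ℂ (u₁ a₁) (v₁ a₁) : ℂ)
        - Complex.I * (inner ℂ (u₃ a₃) (v₃ a₃) : ℂ) := by
  have h2 : ((Real.sqrt 2 : ℝ) : ℂ) * ((Real.sqrt 2 : ℝ) : ℂ) = 2 := by
    rw [← Complex.ofReal_mul, Real.mul_self_sqrt (by norm_num)]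
    norm_num
  have hne : ((Real.sqrt 2 : ℝ) : ℂ) ≠ 0 := by
    simpa using Real.sqrt_ne_zero'.2 (by norm_num : (0:ℝ) < 2)
  simp only [Y₁, Y₂, inner_smul_left, inner_smul_right, inner_add_left, inner_add_right,
    inner_sub_left, inner_sub_right, map_div₀, map_one, map_mul, Complex.conj_I,
    Complex.conj_ofReal]
  field_simp
  ring_nf
  linear_combination
    (((inner ℂ (u₁ a₁) (v₁ a₁) : ℂ) - (inner ℂ (u₃ a₃) (v₃ a₃) : ℂ))
        ) * h2
    + (((inner ℂ (u₁ a₁) (v₁ a₁) : ℂ) - (inner ℂ (u₃ a₃) (v₃ a₃) : ℂ))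
        * (-((Real.sqrt 2 : ℝ) : ℂ) ^ 2)) * Complex.I_sq

end Aux

/-- Green (abstract boundary-value) identity of Lemma 2.1: for all suitable pairs
`u = (u₁, u₃)` and `v = (v₁, v₃)`,
`(M*u, v) − (u, M*v) = ⟪Y₁(u), Y₂(v)⟫ − ⟪Y₂(u), Y₁(v)⟫`. -/
theorem green_identity_halflines
    {H : Type*} [NormedAddCommGroup H] [InnerProductSpace ℂ H] [CompleteSpace H]
    (a₁ a₃ : ℝ) (h13 : a₁ < a₃)
    (u₁ u₁' v₁ v₁' u₃ u₃' v₃ v₃' : ℝ → H)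
    (hu₁ : ∀ t : ℝ, HasDerivAt u₁ (u₁' t) t) (hv₁ : ∀ t : ℝ, HasDerivAt v₁ (v₁' t) t)
    (hu₃ : ∀ t : ℝ, HasDerivAt u₃ (u₃' t) t) (hv₃ : ∀ t : ℝ, HasDerivAt v₃ (v₃' t) t)
    (hL2u₁ : MemL2 u₁ (Set.Iio a₁)) (hL2u₁' : MemL2 u₁' (Set.Iio a₁))
    (hL2v₁ : MemL2 v₁ (Set.Iio a₁)) (hL2v₁' : MemL2 v₁' (Set.Iio a₁))
    (hL2u₃ : MemL2 u₃ (Set.Ioi a₃)) (hL2u₃' : MemL2 u₃' (Set.Ioi a₃))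
    (hL2v₃ : MemL2 v₃ (Set.Ioi a₃)) (hL2v₃' : MemL2 v₃' (Set.Ioi a₃)) :
    (∫ t in Set.Iio a₁,
        ((inner ℂ ((-Complex.I) • u₁' t) (v₁ t) : ℂ) -
          (inner ℂ (u₁ t) ((-Complex.I) • v₁' t) : ℂ))) +
      (∫ t in Set.Ioi a₃,
        ((inner ℂ ((-Complex.I) • u₃' t) (v₃ t) : ℂ) -
          (inner ℂ (u₃ t) ((-Complex.I) • v₃' t) : ℂ))) =
      (inner ℂ (Y₁ a₁ a₃ u₁ u₃) (Y₂ a₁ a₃ v₁ v₃) : ℂ) -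
        (inner ℂ (Y₂ a₁ a₃ u₁ u₃) (Y₁ a₁ a₃ v₁ v₃) : ℂ) := by
  have hint : ∀ (w w' z z' : ℝ → H) (t : ℝ),
      ((inner ℂ ((-Complex.I) • w' t) (z t) : ℂ) - (inner ℂ (w t) ((-Complex.I) • z' t) : ℂ))
      = Complex.I * ((inner ℂ (w t) (z' t) : ℂ) + (inner ℂ (w' t) (z t) : ℂ)) := by
    intro w w' z z' t
    simp only [inner_smul_left, inner_smul_right, map_neg, Complex.conj_I, neg_neg]
    ring
  simp_rw [hint]
  rw [integral_const_mul, integral_const_mul,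
    key_Iio a₁ u₁ u₁' v₁ v₁' hu₁ hv₁ hL2u₁ hL2u₁' hL2v₁ hL2v₁',
    key_Ioi a₃ u₃ u₃' v₃ v₃' hu₃ hv₃ hL2u₃ hL2u₃' hL2v₃ hL2v₃',
    rhs_eval]
  ring
end

section
/- Let a₁ < a₃ be real numbers, λ ∈ ℂ, and let W : H → H be a unitary operator (a surjective linear isometry). Suppose u₁, u₃ : ℝ → H are differentiable, u₁'(t) = λ • u₁(t) for all t ≤ a₁, u₃'(t) = λ • u₃(t) for all t ≥ a₃, u₁ ∈ L²((−∞, a₁); H), u₃ ∈ L²((a₃, ∞); H), and u₃(a₃) = W(u₁(a₁)). Then u₁(t) = 0 for all t ≤ a₁ and u₃(t) = 0 for all t ≥ a₃. -/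
open MeasureTheory

section Helper
open Set

lemma solution_formula {H : Type*} [NormedAddCommGroup H] [NormedSpace ℂ H]
    (l : ℂ) (u : ℝ → H) (hd : Differentiable ℝ u) (a b : ℝ)
    (hode : ∀ t ∈ Icc a b, deriv u t = l • u t) :
    ∀ x ∈ Icc a b, Complex.exp (-(l * x)) • u x = Complex.exp (-(l * a)) • u a := by
  have key : ∀ x ∈ Icc a b, HasDerivAt (fun t : ℝ => Complex.exp (-(l * t)) • u t) 0 x := by
    intro x hx
    have h1 : HasDerivAt (fun t : ℝ => -(l * (t : ℂ))) (-l) x := by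
      have h0 : HasDerivAt (fun t : ℝ => (t : ℂ)) 1 x := Complex.ofRealCLM.hasDerivAt
      convert (h0.const_mul l).neg using 1
      ext t; simp [Pi.neg_apply]
      · funext t; simp [Pi.neg_apply]
      · simp
    have h2 : HasDerivAt (fun t : ℝ => Complex.exp (-(l * t)))
        (Complex.exp (-(l * x)) * (-l)) x := h1.cexp
    have h3 : HasDerivAt u (l • u x) x := by
      have := (hd x).hasDerivAt
      rwa [hode x hx] at this
    have h4 := h2.smul h3
    convert h4 using 1
    · ext t; simp [Pi.smul_apply]
    rw [smul_smul, ← add_smul]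
    ring_nf
    simp
  intro x hx
  have := constant_of_has_deriv_right_zero
    (f := fun t : ℝ => Complex.exp (-(l * t)) • u t) (a := a) (b := b)
    (fun t ht => (Complex.continuous_exp.comp (by continuity)).continuousWithinAt.smul
      (hd.continuous.continuousWithinAt))
    (fun t ht => ((key t (Ico_subset_Icc_self ht)).hasDerivWithinAt)) x hx
  exact this

end Helper

/-- Theorem 3.1: if `u₁, u₃` solve the eigenvalue equations `u' = λ • u` on the half-lines
`(−∞, a₁]` and `[a₃, ∞)` respectively, are square integrable there, and satisfy the
unitary boundary condition `u₃(a₃) = W (u₁(a₁))`, then they vanish identically on those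
half-lines. -/
theorem eigenfunction_vanishes
    {H : Type*} [NormedAddCommGroup H] [InnerProductSpace ℂ H] [CompleteSpace H]
    (a₁ a₃ : ℝ) (h13 : a₁ < a₃) (l : ℂ) (W : H ≃ₗᵢ[ℂ] H)
    (u₁ u₃ : ℝ → H) (hdu₁ : Differentiable ℝ u₁) (hdu₃ : Differentiable ℝ u₃)
    (hode₁ : ∀ t : ℝ, t ≤ a₁ → deriv u₁ t = l • u₁ t)
    (hode₃ : ∀ t : ℝ, a₃ ≤ t → deriv u₃ t = l • u₃ t)
    (hL2u₁ : MemL2 u₁ (Set.Iio a₁)) (hL2u₃ : MemL2 u₃ (Set.Ioi a₃))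
    (hbc : u₃ a₃ = W (u₁ a₁)) :
    (∀ t : ℝ, t ≤ a₁ → u₁ t = 0) ∧ (∀ t : ℝ, a₃ ≤ t → u₃ t = 0) := by
  replace hL2u₁ : MeasureTheory.IntegrableOn (fun t => ‖u₁ t‖ ^ 2) (Set.Iio a₁) := hL2u₁
  replace hL2u₃ : MeasureTheory.IntegrableOn (fun t => ‖u₃ t‖ ^ 2) (Set.Ioi a₃) := hL2u₃
  -- formula on the left half-line
  have hf₁ : ∀ t : ℝ, t ≤ a₁ →
      Complex.exp (-(l * a₁)) • u₁ a₁ = Complex.exp (-(l * t)) • u₁ t := by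
    intro t ht
    exact solution_formula l u₁ hdu₁ t a₁
      (fun s hs => hode₁ s hs.2) a₁ ⟨ht, le_refl _⟩
  have hf₃ : ∀ t : ℝ, a₃ ≤ t →
      Complex.exp (-(l * t)) • u₃ t = Complex.exp (-(l * a₃)) • u₃ a₃ := by
    intro t ht
    exact solution_formula l u₃ hdu₃ a₃ t
      (fun s hs => hode₃ s hs.1) t ⟨ht, le_refl _⟩
  -- norm relations
  have hnorm₁ : ∀ t : ℝ, t ≤ a₁ →
      Real.exp (-(l.re * a₁)) * ‖u₁ a₁‖ = Real.exp (-(l.re * t)) * ‖u₁ t‖ := by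
    intro t ht
    have := congrArg (fun v => ‖v‖) (hf₁ t ht)
    simpa [norm_smul, Complex.norm_exp, Complex.mul_re] using this
  have hnorm₃ : ∀ t : ℝ, a₃ ≤ t →
      Real.exp (-(l.re * t)) * ‖u₃ t‖ = Real.exp (-(l.re * a₃)) * ‖u₃ a₃‖ := by
    intro t ht
    have := congrArg (fun v => ‖v‖) (hf₃ t ht)
    simpa [norm_smul, Complex.norm_exp, Complex.mul_re] using this
  -- key: both endpoint values vanish
  have hend : u₁ a₁ = 0 ∧ u₃ a₃ = 0 := by
    rcases le_total l.re 0 with hl | hl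
    · -- Re l ≤ 0 : u₁ a₁ = 0 by integrability on Iio a₁
      have h0 : u₁ a₁ = 0 := by
        have hbound : ∀ t ∈ Set.Iio a₁, ‖u₁ a₁‖ ^ 2 ≤ ‖u₁ t‖ ^ 2 := by
          intro t ht
          have ht' : t ≤ a₁ := le_of_lt ht
          have h := hnorm₁ t ht'
          have hEt : Real.exp (-(l.re * t)) ≤ Real.exp (-(l.re * a₁)) :=
            Real.exp_le_exp.2 (by nlinarith)
          have hA : ‖u₁ a₁‖ ≤ ‖u₁ t‖ := by
            nlinarith [Real.exp_pos (-(l.re * a₁)), Real.exp_pos (-(l.re * t)),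
              norm_nonneg (u₁ t), norm_nonneg (u₁ a₁)]
          have := norm_nonneg (u₁ a₁)
          nlinarith
        have hconst : MeasureTheory.IntegrableOn
            (fun _ : ℝ => ‖u₁ a₁‖ ^ 2) (Set.Iio a₁) := by
          refine hL2u₁.mono' aestronglyMeasurable_const ?_
          refine (MeasureTheory.ae_restrict_iff' measurableSet_Iio).2 (Filter.Eventually.of_forall ?_)
          intro t ht
          simpa [abs_of_nonneg (sq_nonneg ‖u₁ a₁‖)] using hbound t ht
        rw [MeasureTheory.integrableOn_const_iff] at hconst
        rcases hconst with h | h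
        · exact norm_eq_zero.1 ((pow_eq_zero_iff two_ne_zero).1 (enorm_eq_zero.1 h))
        · simp [Real.volume_Iio] at h
      exact ⟨h0, by simp [hbc, h0]⟩
    · -- Re l ≥ 0 : u₃ a₃ = 0 by integrability on Ioi a₃
      have h0 : u₃ a₃ = 0 := by
        have hbound : ∀ t ∈ Set.Ioi a₃, ‖u₃ a₃‖ ^ 2 ≤ ‖u₃ t‖ ^ 2 := by
          intro t ht
          have ht' : a₃ ≤ t := le_of_lt ht
          have h := hnorm₃ t ht'
          have hEt : Real.exp (-(l.re * t)) ≤ Real.exp (-(l.re * a₃)) :=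
            Real.exp_le_exp.2 (by nlinarith)
          have hA : ‖u₃ a₃‖ ≤ ‖u₃ t‖ := by
            nlinarith [Real.exp_pos (-(l.re * a₃)), Real.exp_pos (-(l.re * t)),
              norm_nonneg (u₃ t), norm_nonneg (u₃ a₃)]
          have := norm_nonneg (u₃ a₃)
          nlinarith
        have hconst : MeasureTheory.IntegrableOn
            (fun _ : ℝ => ‖u₃ a₃‖ ^ 2) (Set.Ioi a₃) := by
          refine hL2u₃.mono' aestronglyMeasurable_const ?_
          refine (MeasureTheory.ae_restrict_iff' measurableSet_Ioi).2 (Filter.Eventually.of_forall ?_)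
          intro t ht
          simpa [abs_of_nonneg (sq_nonneg ‖u₃ a₃‖)] using hbound t ht
        rw [MeasureTheory.integrableOn_const_iff] at hconst
        rcases hconst with h | h
        · exact norm_eq_zero.1 ((pow_eq_zero_iff two_ne_zero).1 (enorm_eq_zero.1 h))
        · simp [Real.volume_Ioi] at h
      have h1 : u₁ a₁ = 0 := by
        have : W (u₁ a₁) = 0 := by rw [← hbc, h0]
        simpa using this
      exact ⟨h1, h0⟩
  obtain ⟨h1, h3⟩ := hend
  constructor
  · intro t ht
    have := hf₁ t ht
    rw [h1, smul_zero] at this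
    rcases smul_eq_zero.1 this.symm with h | h
    · exact absurd h (Complex.exp_ne_zero _)
    · exact h
  · intro t ht
    have := hf₃ t ht
    rw [h3, smul_zero] at this
    rcases smul_eq_zero.1 this with h | h
    · exact absurd h (Complex.exp_ne_zero _)
    · exact h
end
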